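/- arXiv:0904.1870 — 2 statements merged into one kernel-verified Lean document; each statement's English description precedes it below -/
import Mathlib

section
/- Let d_n denote the Taylor coefficients of 1/Γ(z+1) at z = 0, i.e., 1/Γ(z+1) = Σ_{n≥0} d_n z^n. Then for every ε ∈ (0,1), |d_n| = O(n^{−(1−ε)n}) as n → ∞. -/
/-!
By Euler's limit formula, `1/Γ(w) = lim w ∏_{j ≤ n} (1 + w/j) n^(-w)`. For `1 ≤ p ≤ 2` one has
`|1 + u| ≤ exp (Re u + 2|u|^p)`; the factors `exp (Re w / j)` combine with `n^(-w)` into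
`exp (Re w (H_n - log n))` with `|H_n - log n| ≤ 1`, and `∑ j^(-p)` converges for `p > 1`.
Hence `|1/Γ(w)| ≤ exp (C_p |w|^p)` for every `p ∈ (1, 2]`: `1/Γ` has order at most `1`.
Cauchy's estimate on the circle of radius `n^(1/p)` gives `|d_n| ≤ exp (C n) n^(-n/p)`, and for
`1/p = 1 - ε/2` the factor `exp (C n)` is eventually absorbed by `n^(ε n / 2)`.
-/

open Finset Filter Complex Metric
open scoped Nat

lemma Complex.norm_one_add_le_exp (u : ℂ) : ‖1 + u‖ ≤ Real.exp (u.re + ‖u‖ ^ 2 / 2) := by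
  have hsq : ‖1 + u‖ ^ 2 = 1 + 2 * u.re + ‖u‖ ^ 2 := by
    rw [Complex.sq_norm, Complex.sq_norm, Complex.normSq_apply, Complex.normSq_apply]
    simp only [add_re, one_re, add_im, one_im]
    ring
  refine (pow_le_pow_iff_left₀ (norm_nonneg _) (Real.exp_pos _).le two_ne_zero).1 ?_
  rw [hsq]
  calc 1 + 2 * u.re + ‖u‖ ^ 2 ≤ Real.exp (2 * u.re + ‖u‖ ^ 2) := by
        linarith [Real.add_one_le_exp (2 * u.re + ‖u‖ ^ 2)]
    _ = Real.exp (u.re + ‖u‖ ^ 2 / 2) ^ 2 := by rw [← Real.exp_nat_mul]; ring_nf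

lemma Complex.norm_one_add_le_exp_rpow {p : ℝ} (hp1 : 1 ≤ p) (hp2 : p ≤ 2) (u : ℂ) :
    ‖1 + u‖ ≤ Real.exp (u.re + 2 * ‖u‖ ^ p) := by
  rcases le_total ‖u‖ 1 with hu | hu
  · have : ‖u‖ ^ (2 : ℝ) ≤ ‖u‖ ^ p :=
      Real.rpow_le_rpow_of_exponent_ge' (norm_nonneg _) hu (by linarith) hp2
    rw [Real.rpow_two] at this
    refine (norm_one_add_le_exp u).trans (Real.exp_le_exp.2 ?_)
    nlinarith [sq_nonneg ‖u‖]
  · calc ‖1 + u‖ ≤ 1 + ‖u‖ := (norm_add_le _ _).trans (by simp)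
      _ ≤ Real.exp ‖u‖ := by linarith [Real.add_one_le_exp ‖u‖]
      _ ≤ Real.exp (u.re + 2 * ‖u‖ ^ p) := by
        gcongr
        linarith [Real.self_le_rpow_of_one_le hu hp1, neg_le_of_abs_le (Complex.abs_re_le_norm u)]

lemma summable_one_div_nat_add_one_rpow {p : ℝ} (hp : 1 < p) :
    Summable fun j : ℕ => 1 / ((j : ℝ) + 1) ^ p := by
  simpa using (summable_nat_add_iff 1).2 (Real.summable_one_div_nat_rpow.2 hp)

lemma Complex.norm_inv_GammaSeq (w : ℂ) {n : ℕ} (hn : n ≠ 0) :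
    ‖(GammaSeq w n)⁻¹‖ = ‖w‖ * (∏ j ∈ range n, ‖1 + w / (j + 1)‖) / (n : ℝ) ^ w.re := by
  have hprod :
      ∏ j ∈ range (n + 1), (w + j) = w * ((n ! : ℂ) * ∏ j ∈ range n, (1 + w / (j + 1))) := by
    rw [prod_range_succ', Nat.cast_zero, add_zero, mul_comm, ← prod_range_add_one_eq_factorial,
      Nat.cast_prod, ← prod_mul_distrib]
    congr 1
    refine prod_congr rfl fun j _ => ?_
    have : (j : ℂ) + 1 ≠ 0 := by exact_mod_cast j.succ_ne_zero
    push_cast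
    field_simp
    ring
  rw [GammaSeq, inv_div, hprod, norm_div, norm_mul, norm_mul, norm_mul, norm_prod,
    norm_natCast_cpow_of_pos (Nat.pos_of_ne_zero hn), Complex.norm_natCast]
  rw [mul_left_comm, mul_comm ((n : ℝ) ^ w.re), mul_div_mul_left _ _ (by positivity)]

lemma Complex.prod_norm_one_add_div_le {p : ℝ} (hp1 : 1 < p) (hp2 : p ≤ 2) (w : ℂ) (n : ℕ) :
    ∏ j ∈ range n, ‖1 + w / (j + 1)‖ ≤
      Real.exp (w.re * harmonic n + 2 * ‖w‖ ^ p * ∑' j : ℕ, 1 / ((j : ℝ) + 1) ^ p) := by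
  have hterm (j : ℕ) : (w / (j + 1)).re + 2 * ‖w / (j + 1)‖ ^ p =
      w.re * (1 / ((j : ℝ) + 1)) + 2 * ‖w‖ ^ p * (1 / ((j : ℝ) + 1) ^ p) := by
    have hj : (0 : ℝ) < j + 1 := by positivity
    rw [show (j : ℂ) + 1 = ((j + 1 : ℝ) : ℂ) by push_cast; rfl, Complex.div_ofReal_re, norm_div,
      Complex.norm_real, Real.norm_of_nonneg hj.le, Real.div_rpow (norm_nonneg _) hj.le]
    ring
  calc ∏ j ∈ range n, ‖1 + w / (j + 1)‖
      ≤ ∏ j ∈ range n, Real.exp ((w / (j + 1)).re + 2 * ‖w / (j + 1)‖ ^ p) :=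
        prod_le_prod (fun _ _ => norm_nonneg _)
          fun _ _ => norm_one_add_le_exp_rpow hp1.le hp2 _
    _ = Real.exp (w.re * harmonic n + 2 * ‖w‖ ^ p * ∑ j ∈ range n, 1 / ((j : ℝ) + 1) ^ p) := by
        simp only [← Real.exp_sum, hterm, sum_add_distrib, ← mul_sum, harmonic]
        push_cast
        simp
    _ ≤ _ := by
        gcongr
        exact (summable_one_div_nat_add_one_rpow hp1).sum_le_tsum _ fun _ _ => by positivity

lemma Complex.norm_inv_GammaSeq_le {p : ℝ} (hp1 : 1 < p) (hp2 : p ≤ 2) {w : ℂ} {r : ℝ}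
    (hw : ‖w‖ ≤ r) {n : ℕ} (hn : n ≠ 0) :
    ‖(GammaSeq w n)⁻¹‖ ≤ r * Real.exp (r + 2 * r ^ p * ∑' j : ℕ, 1 / ((j : ℝ) + 1) ^ p) := by
  set S := ∑' j : ℕ, 1 / ((j : ℝ) + 1) ^ p
  have hS : 0 ≤ S := tsum_nonneg fun _ => by positivity
  have hn1 : (1 : ℝ) ≤ n := by exact_mod_cast Nat.one_le_iff_ne_zero.2 hn
  have hH : |(harmonic n : ℝ) - Real.log n| ≤ 1 := by
    have := log_add_one_le_harmonic n
    have := harmonic_le_one_add_log n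
    have : Real.log n ≤ Real.log (n + 1 : ℕ) :=
      Real.log_le_log (by linarith) (by push_cast; linarith)
    exact abs_le.2 ⟨by linarith, by linarith⟩
  have hre : w.re * (harmonic n - Real.log n) ≤ r :=
    calc w.re * (harmonic n - Real.log n) ≤ |w.re| * |(harmonic n : ℝ) - Real.log n| :=
          (le_abs_self _).trans (abs_mul _ _).le
      _ ≤ r * 1 := by
          gcongr
          · exact (norm_nonneg w).trans hw
          · exact (abs_re_le_norm w).trans hw
      _ = r := mul_one r
  rw [norm_inv_GammaSeq w hn, Real.rpow_def_of_pos (by linarith), div_le_iff₀ (Real.exp_pos _),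
    mul_assoc, ← Real.exp_add]
  refine mul_le_mul hw ((prod_norm_one_add_div_le hp1 hp2 w n).trans ?_)
    (prod_nonneg fun _ _ => norm_nonneg _) ((norm_nonneg w).trans hw)
  refine Real.exp_le_exp.2 ?_
  have : ‖w‖ ^ p ≤ r ^ p := Real.rpow_le_rpow (norm_nonneg _) hw (by linarith)
  nlinarith

lemma Complex.norm_inv_Gamma_le {p : ℝ} (hp1 : 1 < p) (hp2 : p ≤ 2) {w : ℂ} {r : ℝ}
    (hw : ‖w‖ ≤ r) :
    ‖(Gamma w)⁻¹‖ ≤ r * Real.exp (r + 2 * r ^ p * ∑' j : ℕ, 1 / ((j : ℝ) + 1) ^ p) := by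
  by_cases hΓ : Gamma w = 0
  · rw [hΓ, inv_zero, norm_zero]
    exact mul_nonneg ((norm_nonneg w).trans hw) (Real.exp_pos _).le
  · exact le_of_tendsto ((GammaSeq_tendsto_Gamma w).inv₀ hΓ).norm
      ((eventually_ne_atTop 0).mono fun n hn => norm_inv_GammaSeq_le hp1 hp2 hw hn)

theorem Complex.exists_norm_inv_Gamma_le_exp_rpow {p : ℝ} (hp1 : 1 < p) (hp2 : p ≤ 2) :
    ∃ C, ∀ r, 1 ≤ r → ∀ w : ℂ, ‖w‖ ≤ r → ‖(Gamma w)⁻¹‖ ≤ Real.exp (C * r ^ p) := by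
  set S := ∑' j : ℕ, 1 / ((j : ℝ) + 1) ^ p
  have hS : 0 ≤ S := tsum_nonneg fun _ => by positivity
  refine ⟨2 + 2 * S, fun r hr w hw => (norm_inv_Gamma_le hp1 hp2 hw).trans ?_⟩
  have hrp : r ≤ r ^ p := Real.self_le_rpow_of_one_le hr hp1.le
  calc r * Real.exp (r + 2 * r ^ p * S) ≤ Real.exp r * Real.exp (r + 2 * r ^ p * S) := by
        gcongr
        linarith [Real.add_one_le_exp r]
    _ ≤ Real.exp ((2 + 2 * S) * r ^ p) := by
        rw [← Real.exp_add]
        gcongr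
        nlinarith

theorem Complex.exists_norm_inv_Gamma_add_one_le_exp_rpow {p : ℝ} (hp1 : 1 < p) (hp2 : p ≤ 2) :
    ∃ C, ∀ r, 1 ≤ r → ∀ z : ℂ, ‖z‖ ≤ r → ‖(Gamma (z + 1))⁻¹‖ ≤ Real.exp (C * r ^ p) := by
  obtain ⟨C, hC⟩ := exists_norm_inv_Gamma_le_exp_rpow hp1 hp2
  refine ⟨C * 2 ^ p, fun r hr z hz => ?_⟩
  have hz1 : ‖z + 1‖ ≤ 2 * r := by linarith [norm_add_le z 1, norm_one (α := ℂ)]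
  rw [mul_assoc, ← Real.mul_rpow (by norm_num) (by linarith)]
  exact hC _ (by linarith) _ hz1

theorem hasFPowerSeriesOnBall_ofScalars_of_hasSum {𝕜 : Type*}
    [RCLike 𝕜] {f : 𝕜 → 𝕜} {d : ℕ → 𝕜} (hd : ∀ z, HasSum (fun n => d n * z ^ n) (f z)) :
    HasFPowerSeriesOnBall f (FormalMultilinearSeries.ofScalars 𝕜 d) 0 ⊤ where
  r_le := (ENNReal.eq_top_of_forall_nnreal_le fun r =>
    (FormalMultilinearSeries.ofScalars 𝕜 d).le_radius_of_tendsto (l := 0) <| by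
      simpa [FormalMultilinearSeries.ofScalars_norm] using
        (hd ((r : ℝ) : 𝕜)).summable.tendsto_atTop_zero.norm).ge
  r_pos := ENNReal.zero_lt_top
  hasSum := fun {y} _ => by simpa [FormalMultilinearSeries.ofScalars_apply_eq, mul_comm] using hd y

theorem HasFPowerSeriesAt.norm_coeff_le_of_forall_mem_sphere_norm_le {f : ℂ → ℂ} {d : ℕ → ℂ}
    (hd : HasFPowerSeriesAt f (FormalMultilinearSeries.ofScalars ℂ d) 0) (hf : Differentiable ℂ f)
    {R C : ℝ} (hR : 0 < R) (hC : ∀ z ∈ sphere (0 : ℂ) R, ‖f z‖ ≤ C) (n : ℕ) :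
    ‖d n‖ ≤ C / R ^ n := by
  have hd_eq : d = fun n => iteratedDeriv n f 0 / n ! :=
    FormalMultilinearSeries.ofScalars_series_injective ℂ ℂ
      (hd.eq_formalMultilinearSeries (hf.analyticAt 0).hasFPowerSeriesAt)
  rw [hd_eq, norm_div, Complex.norm_natCast, div_le_iff₀ (by positivity)]
  calc ‖iteratedDeriv n f 0‖ ≤ n ! * C / R ^ n :=
        norm_iteratedDeriv_le_of_forall_mem_sphere_norm_le n hR hf.diffContOnCl hC
    _ = C / R ^ n * n ! := by ring

theorem HasFPowerSeriesAt.norm_coeff_le_of_norm_le_exp_rpow {f : ℂ → ℂ} {d : ℕ → ℂ}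
    (hd : HasFPowerSeriesAt f (FormalMultilinearSeries.ofScalars ℂ d) 0) (hf : Differentiable ℂ f)
    {p C : ℝ} (hp : 0 < p) (hC : ∀ r, 1 ≤ r → ∀ z, ‖z‖ ≤ r → ‖f z‖ ≤ Real.exp (C * r ^ p))
    {n : ℕ} (hn : 1 ≤ n) :
    ‖d n‖ ≤ Real.exp (C * n) / ((n : ℝ) ^ p⁻¹) ^ n := by
  have hn' : (1 : ℝ) ≤ n := by exact_mod_cast hn
  have hR : 1 ≤ (n : ℝ) ^ p⁻¹ := Real.one_le_rpow hn' (inv_pos.2 hp).le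
  refine hd.norm_coeff_le_of_forall_mem_sphere_norm_le hf (by linarith) (fun z hz => ?_) n
  rw [← Real.rpow_inv_rpow (by linarith : (0 : ℝ) ≤ n) hp.ne']
  exact hC _ hR z (mem_sphere_zero_iff_norm.1 hz).le

theorem eventually_exp_mul_div_rpow_pow_le {K a b : ℝ} (hba : b < a) :
    ∀ᶠ n : ℕ in atTop, Real.exp (K * n) / ((n : ℝ) ^ a) ^ n ≤ (n : ℝ) ^ (-b * n) := by
  have hlog : Tendsto (fun n : ℕ => Real.log n) atTop atTop :=
    Real.tendsto_log_atTop.comp tendsto_natCast_atTop_atTop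
  filter_upwards [hlog.eventually_ge_atTop (K / (a - b)), eventually_gt_atTop 0] with n hK hn
  have hn' : (0 : ℝ) < n := by exact_mod_cast hn
  rw [← Real.rpow_natCast, ← Real.rpow_mul hn'.le, Real.rpow_def_of_pos hn',
    Real.rpow_def_of_pos hn', ← Real.exp_sub, Real.exp_le_exp]
  rw [div_le_iff₀ (by linarith)] at hK
  nlinarith

/-- If `d_n` are the Taylor coefficients of the entire function `1/Γ(z+1)`, i.e.
`Σₙ d_n zⁿ = 1/Γ(z+1)` for all `z`, then for every `ε ∈ (0,1)` one has
`|d_n| = O(n^{−(1−ε)n})` as `n → ∞`. -/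
theorem stmt13 (d : ℕ → ℂ)
    (hd : ∀ z : ℂ, HasSum (fun n : ℕ => d n * z ^ n) (1 / Complex.Gamma (z + 1)))
    (ε : ℝ) (hε0 : 0 < ε) (hε1 : ε < 1) :
    (fun n : ℕ => ‖d n‖) =O[Filter.atTop]
      (fun n : ℕ => (n : ℝ) ^ (-(1 - ε) * n)) := by
  obtain ⟨a, ha⟩ : ∃ a : ℝ, a = 1 - ε / 2 := ⟨_, rfl⟩
  have ha0 : 0 < a := by linarith
  obtain ⟨C, hC⟩ := exists_norm_inv_Gamma_add_one_le_exp_rpow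
    ((one_lt_inv₀ ha0).2 (by linarith)) (inv_le_of_inv_le₀ (by norm_num) (by linarith))
  simp_rw [one_div] at hd
  have hps := (hasFPowerSeriesOnBall_ofScalars_of_hasSum hd).hasFPowerSeriesAt
  have hdiff : Differentiable ℂ fun z => (Gamma (z + 1))⁻¹ :=
    differentiable_one_div_Gamma.comp (differentiable_id.add_const 1)
  refine Asymptotics.IsBigO.of_bound 1 ?_
  filter_upwards [eventually_exp_mul_div_rpow_pow_le (K := C) (show 1 - ε < a by linarith),
    eventually_ge_atTop 1] with n hn hn1
  have hcoeff := hps.norm_coeff_le_of_norm_le_exp_rpow hdiff (inv_pos.2 ha0) hC hn1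
  rw [inv_inv] at hcoeff
  rw [Real.norm_of_nonneg (norm_nonneg _), Real.norm_of_nonneg (by positivity), one_mul]
  exact hcoeff.trans hn
end

section
/- For any real α, real t > 0, and natural number m, the Hankel contour integral (1/(2πi)) ∫_{−∞}^{(0+)} (√z)^{m−1} e^{−α√z} e^{zt} dz equals (1/√(πt)) · (1/(2√t))^m · e^{−α²/(4t)} · H_m(α/(2√t)), where H_m is the m-th Hermite polynomial. -/
/-!
Substituting `z = -y²` on the two edges of the cut turns the Hankel integral into
`(1/π) ∫_ℝ (-iy)^m e^{iαy} e^{-ty²} dy`, a Gaussian moment. Multiplying by `(iy)^m` under the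
integral is `m`-fold differentiation in `α` of the Fourier transform
`∫ e^{iαy} e^{-ty²} dy = √(π/t) e^{-α²/(4t)}`, and `(d/du)^m e^{-u²} = (-1)^m e^{-u²} H_m(u)`;
the two signs `(-1)^m` cancel.
-/

/-- The (physicists') Hermite polynomials `H_m(x) = (−1)^m e^{x²} (d/dx)^m e^{−x²}`. -/
noncomputable def physHermite (m : ℕ) (x : ℝ) : ℝ :=
  (-1 : ℝ) ^ m * Real.exp (x ^ 2) * iteratedDeriv m (fun u : ℝ => Real.exp (-u ^ 2)) x

open MeasureTheory in
/-- The Hankel contour integral `(1/(2πi)) ∫_{−∞}^{(0+)} (√z)^{m−1} e^{−α√z} e^{zt} dz`,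
written out via the two edges of the branch cut along the negative real axis
(`√z = ∓i√x` on the lower/upper edge at `z = −x`, `x > 0`). -/
noncomputable def hankel16 (m : ℕ) (α t : ℝ) : ℂ :=
  (1 / (2 * Real.pi * Complex.I)) * ∫ x in Set.Ioi (0 : ℝ),
    ((-(Complex.I * (Real.sqrt x : ℂ))) ^ ((m : ℤ) - 1) *
        Complex.exp ((α : ℂ) * Complex.I * (Real.sqrt x : ℂ))
      - (Complex.I * (Real.sqrt x : ℂ)) ^ ((m : ℤ) - 1) *
        Complex.exp (-((α : ℂ) * Complex.I * (Real.sqrt x : ℂ)))) *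
    Complex.exp (-x * t)

open Complex Real MeasureTheory Set FourierTransform

theorem iteratedDeriv_exp_neg_sq (m : ℕ) (x : ℝ) :
    iteratedDeriv m (fun u : ℝ => Real.exp (-u ^ 2)) x
      = (-1) ^ m * Real.exp (-x ^ 2) * physHermite m x := by
  have hsign : (-1 : ℝ) ^ m * (-1) ^ m = 1 := by rw [← mul_pow]; norm_num
  have hexp : Real.exp (-x ^ 2) * Real.exp (x ^ 2) = 1 := by rw [← Real.exp_add]; simp
  rw [physHermite]
  linear_combination (-(Real.exp (-x ^ 2) * Real.exp (x ^ 2) *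
    iteratedDeriv m (fun u : ℝ => Real.exp (-u ^ 2)) x)) * hsign
    - iteratedDeriv m (fun u : ℝ => Real.exp (-u ^ 2)) x * hexp

theorem iteratedDeriv_ofReal_comp {f : ℝ → ℝ} {n : ℕ} {x : ℝ} (hf : ContDiffAt ℝ n f x) :
    iteratedDeriv n (fun y => (f y : ℂ)) x = iteratedDeriv n f x := by
  simp only [iteratedDeriv_eq_iteratedFDeriv]
  exact congrArg (· fun _ => (1 : ℝ)) (ofRealCLM.iteratedFDeriv_comp_left hf le_rfl)

theorem iteratedDeriv_integral_cexp_mul {f : ℝ → ℂ} {m : ℕ}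
    (hf : ∀ n ≤ m, Integrable (fun y : ℝ => y ^ n • f y)) (α : ℝ) :
    iteratedDeriv m (fun β : ℝ => ∫ y : ℝ, cexp (I * β * y) * f y) α
      = ∫ y : ℝ, (I * y) ^ m * cexp (I * α * y) * f y := by
  have hf' (n : ℕ) (hn : (n : ℕ∞) ≤ m) : Integrable (fun y : ℝ => y ^ n • f y) :=
    hf n (by exact_mod_cast hn)
  set c : ℝ := -(2 * π)⁻¹
  have hc : ∀ β y : ℝ, (-2 * π * y * (c * β) : ℝ) = β * y := by
    intro β y
    simp only [c]
    field_simp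
  have hG : (fun β : ℝ => ∫ y : ℝ, cexp (I * β * y) * f y) = fun β => 𝓕 f (c * β) := by
    funext β
    rw [Real.fourier_real_eq_integral_exp_smul]
    congr 1 with y
    rw [hc, smul_eq_mul]
    push_cast
    ring_nf
  have hsmooth : ContDiff ℝ m (𝓕 f) := Real.contDiff_fourier fun n hn => by
    simpa [norm_smul] using (hf' n hn).norm
  have hcoef : ∀ y : ℝ, (c : ℂ) * (-2 * π * I * y) = I * y := by
    intro y
    simp only [c]
    push_cast
    field_simp
  rw [hG, iteratedDeriv_comp_const_smul hsmooth, Real.iteratedDeriv_fourier hf' le_rfl]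
  beta_reduce
  rw [Real.fourier_real_eq_integral_exp_smul, ← integral_smul]
  congr 1 with y
  rw [hc, ← hcoef, mul_pow]
  simp only [smul_eq_mul, real_smul, ofReal_mul, ofReal_pow]
  ring_nf

theorem integral_cexp_mul_gaussian {t : ℝ} (ht : 0 < t) (β : ℝ) :
    ∫ y : ℝ, cexp (I * β * y) * cexp (-t * y ^ 2)
      = (√(π / t) * Real.exp (-((2 * √t)⁻¹ * β) ^ 2) : ℝ) := by
  have hsqrt : ((π : ℂ) / t) ^ (1 / 2 : ℂ) = √(π / t) := by
    rw [Real.sqrt_eq_rpow, ofReal_cpow (div_pos pi_pos ht).le]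
    push_cast
    ring_nf
  have ht' : (t : ℂ) = (√t : ℂ) ^ 2 := by rw [← ofReal_pow, Real.sq_sqrt ht.le]
  rw [fourierIntegral_gaussian (by simpa using ht), hsqrt, ofReal_mul, ofReal_exp]
  congr 2
  rw [ht']
  push_cast
  field_simp
  ring

theorem iteratedDeriv_integral_cexp_mul_gaussian {t : ℝ} (ht : 0 < t) (m : ℕ) (α : ℝ) :
    iteratedDeriv m (fun β : ℝ => ∫ y : ℝ, cexp (I * β * y) * cexp (-t * y ^ 2)) α
      = ((-1) ^ m * (√(π / t) * (2 * √t)⁻¹ ^ m *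
          Real.exp (-((2 * √t)⁻¹ * α) ^ 2) * physHermite m ((2 * √t)⁻¹ * α)) : ℝ) := by
  have hg : ContDiff ℝ m (fun u : ℝ => Real.exp (-u ^ 2)) := by fun_prop
  have hgc : ContDiff ℝ m (fun β : ℝ => Real.exp (-((2 * √t)⁻¹ * β) ^ 2)) := by fun_prop
  simp_rw [integral_cexp_mul_gaussian ht]
  rw [iteratedDeriv_ofReal_comp ((contDiff_const.mul hgc).contDiffAt),
    iteratedDeriv_const_mul _ hgc.contDiffAt,
    iteratedDeriv_comp_const_mul hg]
  beta_reduce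
  rw [iteratedDeriv_exp_neg_sq]
  congr 1
  ring

theorem integrable_pow_smul_cexp_neg_mul_sq {t : ℝ} (ht : 0 < t) (n : ℕ) :
    Integrable (fun y : ℝ => y ^ n • cexp (-t * y ^ 2)) := by
  have h := (integrable_rpow_mul_exp_neg_mul_sq ht
    (by linarith [(n.cast_nonneg : (0 : ℝ) ≤ n)] : (-1 : ℝ) < n)).ofReal (𝕜 := ℂ)
  refine h.congr (ae_of_all _ fun y => ?_)
  simp [Real.rpow_natCast, real_smul, ofReal_exp]

section
variable {E : Type*} [NormedAddCommGroup E] [NormedSpace ℝ E]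

theorem integral_Ioi_add_comp_neg {F : ℝ → E} (hF : Integrable F) :
    ∫ y in Ioi (0 : ℝ), (F y + F (-y)) = ∫ y, F y := by
  rw [integral_add hF.integrableOn hF.comp_neg.integrableOn, integral_comp_neg_Ioi, neg_zero,
    add_comm, intervalIntegral.integral_Iic_add_Ioi hF.integrableOn hF.integrableOn]

theorem integral_Ioi_eq_integral_Ioi_comp_sq (g : ℝ → E) :
    ∫ x in Ioi (0 : ℝ), g x = ∫ y in Ioi (0 : ℝ), (2 * y) • g (y ^ 2) := by
  rw [← integral_comp_rpow_Ioi g two_ne_zero]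
  refine setIntegral_congr_fun measurableSet_Ioi fun y _ => ?_
  norm_num

end

-- The integrand after `x = y²`: its values at `y` and `-y` come from the two edges of the cut.
noncomputable def hankelBranchIntegrand (m : ℕ) (α t y : ℝ) : ℂ :=
  (-I * y) ^ m * cexp (I * α * y) * cexp (-t * y ^ 2)

theorem hankel16_integrand_comp_sq (m : ℕ) (α t : ℝ) {y : ℝ} (hy : 0 < y) :
    (2 * y) • (((-(I * (√(y ^ 2) : ℂ))) ^ ((m : ℤ) - 1) * cexp (α * I * √(y ^ 2))
      - (I * (√(y ^ 2) : ℂ)) ^ ((m : ℤ) - 1) * cexp (-(α * I * √(y ^ 2)))) *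
        cexp (-(y ^ 2 : ℝ) * t))
      = 2 * I * (hankelBranchIntegrand m α t y + hankelBranchIntegrand m α t (-y)) := by
  have hy0 : (y : ℂ) ≠ 0 := ofReal_ne_zero.mpr hy.ne'
  rw [Real.sqrt_sq hy.le, zpow_sub_one₀ (by simp [hy0]), zpow_sub_one₀ (by simp [hy0]),
    zpow_natCast, zpow_natCast, hankelBranchIntegrand, hankelBranchIntegrand, real_smul]
  push_cast
  field_simp
  ring_nf
  rw [I_sq]
  ring

theorem integrable_hankelBranchIntegrand (m : ℕ) (α : ℝ) {t : ℝ} (ht : 0 < t) :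
    Integrable (hankelBranchIntegrand m α t) := by
  have h := ((integrable_pow_smul_cexp_neg_mul_sq ht m).bdd_mul (c := 1)
    (by fun_prop : AEStronglyMeasurable (fun y : ℝ => cexp (I * α * y)))
    (ae_of_all _ fun y => by simp [norm_exp])).const_mul ((-I) ^ m)
  refine h.congr (ae_of_all _ fun y => ?_)
  simp only [hankelBranchIntegrand, real_smul, ofReal_pow, mul_pow]
  ring

theorem hankel16_eq_integral (m : ℕ) (α : ℝ) {t : ℝ}
    (hint : Integrable (hankelBranchIntegrand m α t)) :
    hankel16 m α t = (π : ℂ)⁻¹ * ∫ y, hankelBranchIntegrand m α t y := by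
  rw [hankel16, integral_Ioi_eq_integral_Ioi_comp_sq,
    setIntegral_congr_fun measurableSet_Ioi fun y hy => hankel16_integrand_comp_sq m α t hy,
    integral_const_mul, integral_Ioi_add_comp_neg hint]
  field_simp

/-- For real `α`, `t > 0` and `m : ℕ`,
`(1/(2πi)) ∫_{−∞}^{(0+)} (√z)^{m−1} e^{−α√z} e^{zt} dz
 = (1/√(πt)) (1/(2√t))^m e^{−α²/(4t)} H_m(α/(2√t))`. -/
theorem stmt16 (α t : ℝ) (ht : 0 < t) (m : ℕ) :
    hankel16 m α t
      = ((1 / Real.sqrt (Real.pi * t)) * (1 / (2 * Real.sqrt t)) ^ m *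
          Real.exp (-α ^ 2 / (4 * t)) * physHermite m (α / (2 * Real.sqrt t)) : ℝ) := by
  have hmoment : ∫ y, hankelBranchIntegrand m α t y
      = (-1) ^ m * ∫ y : ℝ, (I * y) ^ m * cexp (I * α * y) * cexp (-t * y ^ 2) := by
    rw [← integral_const_mul]
    congr 1 with y
    rw [hankelBranchIntegrand, neg_mul, neg_pow]
    ring
  have hsqrt : π⁻¹ * √(π / t) = 1 / √(π * t) := by
    rw [Real.sqrt_div' _ ht.le, Real.sqrt_mul pi_pos.le]
    field_simp
    rw [Real.sq_sqrt pi_pos.le]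
  have hexp : -((2 * √t)⁻¹ * α) ^ 2 = -α ^ 2 / (4 * t) := by
    rw [mul_pow, inv_pow, mul_pow, Real.sq_sqrt ht.le]
    ring
  have hsign : ∀ x : ℝ, (-1 : ℂ) ^ m * ((-1 : ℝ) ^ m * x : ℝ) = x := by
    intro x
    push_cast
    rw [← mul_assoc, ← mul_pow]
    norm_num
  rw [hankel16_eq_integral m α (integrable_hankelBranchIntegrand m α ht), hmoment,
    ← iteratedDeriv_integral_cexp_mul (fun n _ => integrable_pow_smul_cexp_neg_mul_sq ht n) α,
    iteratedDeriv_integral_cexp_mul_gaussian ht, hsign, ← ofReal_inv, ← ofReal_mul, hexp,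
    div_eq_inv_mul α, ← hsqrt, one_div (2 * √t)]
  congr 1
  ring
end
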